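/- arXiv:2509.09240 — 5 statements merged into one kernel-verified Lean document; each statement's English description precedes it below -/
import Mathlib

section
/- Let n ≥ 1 and let f : 𝕋 → M_n(ℂ). Suppose (f₋, f₊) and (g₋, g₊) are two right canonical factorization data for f. Then there exists an invertible matrix C ∈ GL(n, ℂ) such that g₊(z) = C · f₊(z) and g₋(z) = f₋(z) · C⁻¹ for all z in the closed unit disk 𝔻̄. -/
open Complex Matrix

/-- The closed unit disk in `ℂ`. -/
def closedDisk : Set ℂ := {z : ℂ | ‖z‖ ≤ 1}

/-- The open unit disk in `ℂ`. -/
def openDisk : Set ℂ := {z : ℂ | ‖z‖ < 1}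

/-- A right canonical factorization datum for `f : 𝕋 → Mₙ(ℂ)`: a pair `(fm, fp)` of maps on the
closed unit disk, continuous there, holomorphic on the open disk, taking invertible values, with
`f z = fm z̄ * fp z` on the unit circle. -/
structure RightCanonicalFactorizationDatum (n : ℕ)
    (f fm fp : ℂ → Matrix (Fin n) (Fin n) ℂ) : Prop where
  cont_m : ContinuousOn fm closedDisk
  cont_p : ContinuousOn fp closedDisk
  hol_m : ∀ i j, DifferentiableOn ℂ (fun z => fm z i j) openDisk
  hol_p : ∀ i j, DifferentiableOn ℂ (fun z => fp z i j) openDisk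
  unit_m : ∀ z ∈ closedDisk, IsUnit (fm z)
  unit_p : ∀ z ∈ closedDisk, IsUnit (fp z)
  factor : ∀ z : ℂ, ‖z‖ = 1 → f z = fm (starRingEnd ℂ z) * fp z

/-!
On the unit circle `fm z̄ * fp z = gm z̄ * gp z`, so the transition functions `gp * fp⁻¹` and
`gm⁻¹ * fm`, holomorphic in the disk and continuous up to the circle, agree at `z` and `z̄` for
`|z| = 1`. Such a pair `φ, ψ` is constant: by the generalized mean value property `φ w` is the
circle average of `z / (z - w) • ψ z⁻¹`; the substitution `z ↦ z⁻¹` turns this into the average of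
`(1 - w z)⁻¹ • ψ z`, which is holomorphic on the closed disk, so the average is its value `ψ 0`.
-/

open Metric Set ComplexConjugate Real

theorem closedDisk_eq_closedBall : closedDisk = closedBall (0 : ℂ) 1 := by
  ext z; simp [closedDisk]

theorem openDisk_eq_ball : openDisk = ball (0 : ℂ) 1 := by
  ext z; simp [openDisk]

theorem diffContOnCl_inv_one_sub_mul {w : ℂ} (hw : ‖w‖ < 1) :
    DiffContOnCl ℂ (fun z ↦ (1 - w * z)⁻¹) (ball 0 1) := by
  refine DifferentiableOn.diffContOnCl_ball (U := closedBall 0 1) ?_ subset_rfl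
  refine ((differentiableOn_const 1).sub (differentiableOn_id.const_mul w)).inv fun z hz ↦ ?_
  have hwz : ‖w * z‖ < 1 := by
    rw [norm_mul]
    exact mul_lt_one_of_nonneg_of_lt_one_left (norm_nonneg w) hw (mem_closedBall_zero_iff.mp hz)
  exact sub_ne_zero.mpr fun h ↦ by simp [← h] at hwz

section Reflection

variable {E : Type*} [NormedAddCommGroup E] [NormedSpace ℂ E] [CompleteSpace E]

theorem eqOn_closedBall_const_of_eq_comp_conj {φ ψ : ℂ → E}
    (hφ : DiffContOnCl ℂ φ (ball 0 1)) (hψ : DiffContOnCl ℂ ψ (ball 0 1))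
    (h : ∀ z ∈ sphere (0 : ℂ) 1, φ z = ψ (conj z)) :
    EqOn φ (fun _ ↦ ψ 0) (closedBall 0 1) := by
  have hball : EqOn φ (fun _ ↦ ψ 0) (ball 0 1) := by
    intro w hw
    calc φ w = circleAverage (fun z ↦ (z / (z - w)) • φ z) 0 1 := by
          simpa using (DiffContOnCl.circleAverage_smul_div (c := 0) (R := 1) (f := φ)
            (by rwa [abs_one]) (by rwa [abs_one])).symm
      _ = circleAverage (fun z ↦ (z / (z - w)) • ψ z⁻¹) 0 1 := by
          refine circleAverage_congr_sphere fun z hz ↦ ?_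
          rw [abs_one] at hz
          simp only [h z hz, ← inv_eq_conj (mem_sphere_zero_iff_norm.mp hz)]
      _ = circleAverage (fun z ↦ (z⁻¹ / (z⁻¹ - w)) • ψ z) 0 1 := by
          rw [← circleAverage_zero_one_congr_inv]
          simp only [inv_inv]
      _ = circleAverage (fun z ↦ (1 - w * z)⁻¹ • ψ z) 0 1 := by
          refine circleAverage_congr_sphere fun z hz ↦ ?_
          have hz0 : z ≠ 0 := by rintro rfl; simp at hz
          have : z⁻¹ - w = z⁻¹ * (1 - w * z) := by field_simp
          simp only [this, div_mul_cancel_left₀ (inv_ne_zero hz0)]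
      _ = ψ 0 := by
          rw [DiffContOnCl.circleAverage (by
            rw [abs_one]; exact (diffContOnCl_inv_one_sub_mul (mem_ball_zero_iff.mp hw)).smul hψ)]
          simp
  exact hball.of_subset_closure hφ.continuousOn_ball continuousOn_const ball_subset_closedBall
    (closure_ball 0 one_ne_zero).ge

theorem exists_eqOn_closedBall_const_of_eq_comp_conj {φ ψ : ℂ → E}
    (hφ : DiffContOnCl ℂ φ (ball 0 1)) (hψ : DiffContOnCl ℂ ψ (ball 0 1))
    (h : ∀ z ∈ sphere (0 : ℂ) 1, φ z = ψ (conj z)) :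
    ∃ c, EqOn φ (fun _ ↦ c) (closedBall 0 1) ∧ EqOn ψ (fun _ ↦ c) (closedBall 0 1) := by
  have hφc := eqOn_closedBall_const_of_eq_comp_conj hφ hψ h
  have hψc := eqOn_closedBall_const_of_eq_comp_conj hψ hφ fun z hz ↦ by
    rw [h (conj z) (by simpa using hz), conj_conj]
  exact ⟨ψ 0, hφc, fun z hz ↦ (hψc hz).trans (hφc (mem_closedBall_self zero_le_one))⟩

end Reflection

theorem Matrix.mul_inv_eq_inv_mul_of_mul_eq {m α : Type*} [Fintype m] [DecidableEq m] [CommRing α]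
    {A B C D : Matrix m m α} (hB : IsUnit B) (hC : IsUnit C) (h : A * B = C * D) :
    D * B⁻¹ = C⁻¹ * A := by
  rw [isUnit_iff_isUnit_det] at hB hC
  calc D * B⁻¹ = C⁻¹ * (C * D) * B⁻¹ := by rw [nonsing_inv_mul_cancel_left _ _ hC]
    _ = C⁻¹ * A := by rw [← h, Matrix.mul_assoc, mul_nonsing_inv_cancel_right _ _ hB]

section RingValued

variable {𝕜 E R : Type*} [NontriviallyNormedField 𝕜] [NormedAddCommGroup E] [NormedSpace 𝕜 E]
  [NormedRing R] [NormedAlgebra 𝕜 R] {s : Set E} {g h : E → R}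

theorem DiffContOnCl.mul (hg : DiffContOnCl 𝕜 g s) (hh : DiffContOnCl 𝕜 h s) :
    DiffContOnCl 𝕜 (fun x ↦ g x * h x) s :=
  ⟨hg.1.mul hh.1, hg.2.mul hh.2⟩

theorem DiffContOnCl.ringInverse [CompleteSpace R] (hh : DiffContOnCl 𝕜 h s)
    (hu : ∀ x ∈ closure s, IsUnit (h x)) : DiffContOnCl 𝕜 (fun x ↦ Ring.inverse (h x)) s :=
  ⟨hh.1.inverse fun x hx ↦ hu x (subset_closure hx), fun x hx ↦
    ((hu x hx).unit_spec ▸ NormedRing.inverse_continuousAt (hu x hx).unit :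
      ContinuousAt Ring.inverse (h x)).comp_continuousWithinAt (hh.2 x hx)⟩

end RingValued

section MatrixValued

-- The operator norm makes matrices a complete normed algebra, so that inversion is
-- differentiable; it induces the entrywise topology of `RightCanonicalFactorizationDatum`.
open scoped Matrix.Norms.Operator

variable {𝕜 E m : Type*} [RCLike 𝕜] [NormedAddCommGroup E] [NormedSpace 𝕜 E]
  [Fintype m] [DecidableEq m] {s : Set E} {M : E → Matrix m m 𝕜}

theorem differentiableOn_matrix_of_entries (h : ∀ i j, DifferentiableOn 𝕜 (fun x ↦ M x i j) s) :
    DifferentiableOn 𝕜 M s := by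
  have hM : M = fun x ↦ ∑ i, ∑ j, M x i j • single i j (1 : 𝕜) := by
    ext x : 1
    conv_lhs => rw [matrix_eq_sum_single (M x)]
    simp only [smul_single, smul_eq_mul, mul_one]
  rw [hM]
  exact DifferentiableOn.fun_sum fun i _ ↦ DifferentiableOn.fun_sum fun j _ ↦
    (h i j).smul_const _

theorem DiffContOnCl.matrix_inv (hM : DiffContOnCl 𝕜 M s)
    (hu : ∀ x ∈ closure s, IsUnit (M x)) : DiffContOnCl 𝕜 (fun x ↦ (M x)⁻¹) s := by
  simp_rw [nonsing_inv_eq_ringInverse]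
  exact hM.ringInverse hu

namespace RightCanonicalFactorizationDatum

variable {n : ℕ} {f fm fp gm gp : ℂ → Matrix (Fin n) (Fin n) ℂ}

theorem diffContOnCl_plus (h : RightCanonicalFactorizationDatum n f fm fp) :
    DiffContOnCl ℂ fp (ball 0 1) :=
  .mk_ball (openDisk_eq_ball ▸ differentiableOn_matrix_of_entries h.hol_p)
    (closedDisk_eq_closedBall ▸ h.cont_p)

theorem diffContOnCl_minus (h : RightCanonicalFactorizationDatum n f fm fp) :
    DiffContOnCl ℂ fm (ball 0 1) :=
  .mk_ball (openDisk_eq_ball ▸ differentiableOn_matrix_of_entries h.hol_m)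
    (closedDisk_eq_closedBall ▸ h.cont_m)

theorem exists_transition_eq_const (hf : RightCanonicalFactorizationDatum n f fm fp)
    (hg : RightCanonicalFactorizationDatum n f gm gp) :
    ∃ C, ∀ z ∈ closedDisk, gp z * (fp z)⁻¹ = C ∧ (gm z)⁻¹ * fm z = C := by
  have hclosure : closure (ball (0 : ℂ) 1) = closedDisk := by
    rw [closure_ball 0 one_ne_zero, closedDisk_eq_closedBall]
  have hsphere (z : ℂ) (hz : z ∈ sphere 0 1) :
      gp z * (fp z)⁻¹ = (gm (conj z))⁻¹ * fm (conj z) := by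
    have hz1 : ‖z‖ = 1 := mem_sphere_zero_iff_norm.mp hz
    refine Matrix.mul_inv_eq_inv_mul_of_mul_eq (hf.unit_p z hz1.le)
      (hg.unit_m (conj z) (by simp [closedDisk, hz1])) ?_
    rw [← hf.factor z hz1, hg.factor z hz1]
  obtain ⟨C, hplus, hminus⟩ := exists_eqOn_closedBall_const_of_eq_comp_conj
    (hg.diffContOnCl_plus.mul (hf.diffContOnCl_plus.matrix_inv (hclosure ▸ hf.unit_p)))
    ((hg.diffContOnCl_minus.matrix_inv (hclosure ▸ hg.unit_m)).mul hf.diffContOnCl_minus)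
    hsphere
  rw [← closedDisk_eq_closedBall] at hplus hminus
  exact ⟨C, fun z hz ↦ ⟨hplus hz, hminus hz⟩⟩

end RightCanonicalFactorizationDatum

end MatrixValued

theorem right_canonical_factorization_unique_up_to_constant_general
    {n : ℕ} (f fm fp gm gp : ℂ → Matrix (Fin n) (Fin n) ℂ)
    (hf : RightCanonicalFactorizationDatum n f fm fp)
    (hg : RightCanonicalFactorizationDatum n f gm gp) :
    ∃ C : Matrix (Fin n) (Fin n) ℂ, IsUnit C ∧
      ∀ z ∈ closedDisk, gp z = C * fp z ∧ gm z = fm z * C⁻¹ := by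
  obtain ⟨C, hC⟩ := hf.exists_transition_eq_const hg
  have hdet {M : ℂ → Matrix (Fin n) (Fin n) ℂ} (hM : ∀ z ∈ closedDisk, IsUnit (M z))
      {z : ℂ} (hz : z ∈ closedDisk) : IsUnit (M z).det :=
    (isUnit_iff_isUnit_det _).mp (hM z hz)
  have h0 : (0 : ℂ) ∈ closedDisk := by simp [closedDisk]
  refine ⟨C, ?_, fun z hz ↦ ⟨?_, ?_⟩⟩
  · rw [← (hC 0 h0).1]
    exact (hg.unit_p 0 h0).mul (isUnit_nonsing_inv_iff.mpr (hf.unit_p 0 h0))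
  · rw [← (hC z hz).1, nonsing_inv_mul_cancel_right _ _ (hdet hf.unit_p hz)]
  · rw [← (hC z hz).2, Matrix.mul_inv_rev, nonsing_inv_nonsing_inv _ (hdet hg.unit_m hz),
      mul_nonsing_inv_cancel_left _ _ (hdet hf.unit_m hz)]

/-- Two right canonical factorization data of the same symbol differ by a constant invertible
matrix. -/
theorem right_canonical_factorization_unique_up_to_constant
    {n : ℕ} (hn : 1 ≤ n) (f fm fp gm gp : ℂ → Matrix (Fin n) (Fin n) ℂ)
    (hf : RightCanonicalFactorizationDatum n f fm fp)
    (hg : RightCanonicalFactorizationDatum n f gm gp) :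
    ∃ C : Matrix (Fin n) (Fin n) ℂ, IsUnit C ∧
      ∀ z ∈ closedDisk, gp z = C * fp z ∧ gm z = fm z * C⁻¹ :=
  right_canonical_factorization_unique_up_to_constant_general f fm fp gm gp hf hg
end

section
/- Let n ≥ 1 and let f : 𝕋 → M_n(ℂ). Suppose (g₊, g₋) and (h₊, h₋) are two left canonical factorization data for f. Then there exists an invertible matrix C ∈ GL(n, ℂ) such that h₊(z) = g₊(z) · C⁻¹ and h₋(z) = C · g₋(z) for all z in the closed unit disk 𝔻̄. -/
open Complex Matrix

/-- A left canonical factorization datum for `f : 𝕋 → Mₙ(ℂ)`: a pair `(gp, gm)` of maps on the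
closed unit disk, continuous there, holomorphic on the open disk, taking invertible values, with
`f z = gp z * gm z̄` on the unit circle. -/
structure LeftCanonicalFactorizationDatum (n : ℕ)
    (f gp gm : ℂ → Matrix (Fin n) (Fin n) ℂ) : Prop where
  cont_p : ContinuousOn gp closedDisk
  cont_m : ContinuousOn gm closedDisk
  hol_p : ∀ i j, DifferentiableOn ℂ (fun z => gp z i j) openDisk
  hol_m : ∀ i j, DifferentiableOn ℂ (fun z => gm z i j) openDisk
  unit_p : ∀ z ∈ closedDisk, IsUnit (gp z)
  unit_m : ∀ z ∈ closedDisk, IsUnit (gm z)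
  factor : ∀ z : ℂ, ‖z‖ = 1 → f z = gp z * gm (starRingEnd ℂ z)

/-!
If `gp gm = hp hm` on the circle, then `F = gp⁻¹ hp` and `G = gm hm⁻¹` are holomorphic in the disk,
continuous up to the circle, and satisfy `F z = G z̄` there. Such a pair must be constant: for `|a| < 1`
the Cauchy formula for `F` at `a`, after the substitution `z ↦ z̄ = z⁻¹` on the circle, becomes the
Cauchy formula at `0` for `w ↦ G w / (1 - a w)`, so `F a = G 0`. Hence `hp = gp C⁻¹` and
`hm = C gm` with `C = (G 0)⁻¹`.
-/

open Metric Set ComplexConjugate Real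

theorem openDisk_subset_closedDisk : openDisk ⊆ closedDisk := fun _ hz => le_of_lt (α := ℝ) hz

section CircleIntegral

variable {E : Type*} [NormedAddCommGroup E] [NormedSpace ℂ E]

theorem circleMap_two_pi_sub (θ : ℝ) : circleMap 0 1 (2 * π - θ) = conj (circleMap 0 1 θ) := by
  rw [conj_circleMap_zero, sub_eq_neg_add, periodic_circleMap 0 1]

theorem circleIntegral_comp_conj (φ : ℂ → E) :
    (∮ z in C(0, 1), φ (conj z)) = ∮ z in C(0, 1), (z ^ 2)⁻¹ • φ z := by
  simp only [circleIntegral, deriv_circleMap]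
  have hreflect := intervalIntegral.integral_comp_sub_left (a := 0) (b := 2 * π)
    (fun θ => (circleMap 0 1 θ * I) • (circleMap 0 1 θ ^ 2)⁻¹ • φ (circleMap 0 1 θ)) (2 * π)
  rw [sub_zero, sub_self] at hreflect
  rw [← hreflect]
  refine intervalIntegral.integral_congr fun θ _ => ?_
  have hunit : conj (circleMap 0 1 θ) * circleMap 0 1 θ = 1 := by
    rw [← normSq_eq_conj_mul_self, normSq_eq_norm_sq, norm_circleMap_zero]
    norm_num
  simp only [circleMap_two_pi_sub, smul_smul]
  congr 1
  field_simp
  linear_combination hunit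

theorem DiffContOnCl.eqOn_const_of_eq_comp_conj [CompleteSpace E] {u v : ℂ → E}
    (hu : DiffContOnCl ℂ u (ball 0 1)) (hv : DiffContOnCl ℂ v (ball 0 1))
    (huv : ∀ z ∈ sphere (0 : ℂ) 1, u z = v (conj z)) :
    EqOn u (fun _ => v 0) (closedBall 0 1) := by
  have hball : EqOn u (fun _ => v 0) (ball 0 1) := by
    intro a ha
    have hne : ∀ w ∈ closedBall (0 : ℂ) 1, 1 - a * w ≠ 0 := by
      intro w hw h
      have : ‖a * w‖ < 1 := by
        rw [norm_mul]
        exact mul_lt_one_of_nonneg_of_lt_one_left (norm_nonneg a) (mem_ball_zero_iff.mp ha)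
          (mem_closedBall_zero_iff.mp hw)
      simp [← sub_eq_zero.mp h] at this
    have hg : DiffContOnCl ℂ (fun w => (1 - a * w)⁻¹ • v w) (ball 0 1) := by
      refine DiffContOnCl.smul (DiffContOnCl.inv ?_ ?_) hv
      · exact ((differentiable_const 1).sub (differentiable_id.const_mul a)).diffContOnCl
      · rwa [closure_ball 0 one_ne_zero]
    have h2piI : (2 * π * I : ℂ) ≠ 0 := by simp [pi_ne_zero, I_ne_zero]
    refine smul_right_injective E h2piI ?_
    calc (2 * π * I : ℂ) • u a = ∮ z in C(0, 1), (z - a)⁻¹ • u z :=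
          (hu.circleIntegral_sub_inv_smul ha).symm
      _ = ∮ z in C(0, 1), (fun w => (w⁻¹ - a)⁻¹ • v w) (conj z) := by
          refine circleIntegral.integral_congr zero_le_one fun z hz => ?_
          simp only [huv z hz, ← RCLike.inv_eq_conj (mem_sphere_zero_iff_norm.mp hz), inv_inv]
      _ = ∮ z in C(0, 1), (z - 0)⁻¹ • (1 - a * z)⁻¹ • v z := by
          refine (circleIntegral_comp_conj fun w => (w⁻¹ - a)⁻¹ • v w).trans ?_
          refine circleIntegral.integral_congr zero_le_one fun z hz => ?_
          have hz0 : z ≠ 0 := ne_zero_of_mem_sphere one_ne_zero ⟨z, hz⟩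
          simp only [smul_smul, sub_zero, ← mul_inv]
          congr 2
          field_simp
      _ = (2 * π * I : ℂ) • (1 - a * 0)⁻¹ • v 0 :=
          hg.circleIntegral_sub_inv_smul (mem_ball_self one_pos)
      _ = (2 * π * I : ℂ) • v 0 := by simp
  exact hball.of_subset_closure hu.continuousOn_ball continuousOn_const ball_subset_closedBall
    (closure_ball 0 one_ne_zero).ge

theorem Matrix.eq_const_of_eq_comp_conj {m p : Type*} {F G : ℂ → Matrix m p ℂ}
    (hF : ∀ i j, DiffContOnCl ℂ (fun z => F z i j) (ball 0 1))
    (hG : ∀ i j, DiffContOnCl ℂ (fun z => G z i j) (ball 0 1))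
    (hFG : ∀ z ∈ sphere (0 : ℂ) 1, F z = G (conj z)) :
    ∀ z ∈ closedBall (0 : ℂ) 1, F z = G 0 := fun _ hz =>
  Matrix.ext fun i j =>
    (hF i j).eqOn_const_of_eq_comp_conj (hG i j) (fun w hw => congrFun₂ (hFG w hw) i j) hz

end CircleIntegral

section MatrixFunctions

variable {𝕜 ι : Type*} [NontriviallyNormedField 𝕜] [Fintype ι] {s : Set 𝕜}
  {A B : 𝕜 → Matrix ι ι 𝕜}

theorem differentiableOn_matrix_mul_apply (hA : ∀ i j, DifferentiableOn 𝕜 (fun z => A z i j) s)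
    (hB : ∀ i j, DifferentiableOn 𝕜 (fun z => B z i j) s) (i j : ι) :
    DifferentiableOn 𝕜 (fun z => (A z * B z) i j) s := by
  simp only [mul_apply]
  exact .fun_sum fun k _ => (hA i k).mul (hB k j)

variable [DecidableEq ι]

theorem differentiableOn_matrix_det (hA : ∀ i j, DifferentiableOn 𝕜 (fun z => A z i j) s) :
    DifferentiableOn 𝕜 (fun z => (A z).det) s := by
  simp only [det_apply']
  exact .fun_sum fun σ _ => (DifferentiableOn.fun_finsetProd fun i _ => hA (σ i) i).const_mul _

theorem differentiableOn_matrix_adjugate_apply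
    (hA : ∀ i j, DifferentiableOn 𝕜 (fun z => A z i j) s) (i j : ι) :
    DifferentiableOn 𝕜 (fun z => (A z).adjugate i j) s := by
  simp only [adjugate_apply]
  refine differentiableOn_matrix_det fun k l => ?_
  by_cases hkj : k = j
  · simp only [hkj, updateRow_self]
    exact differentiableOn_const _
  · simp only [updateRow_ne hkj]
    exact hA k l

theorem differentiableOn_matrix_inv_apply (hA : ∀ i j, DifferentiableOn 𝕜 (fun z => A z i j) s)
    (hAs : ∀ z ∈ s, IsUnit (A z)) (i j : ι) :
    DifferentiableOn 𝕜 (fun z => (A z)⁻¹ i j) s := by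
  have hinv : ∀ z, (A z)⁻¹ i j = (A z).det⁻¹ * (A z).adjugate i j := fun z => by
    rw [Matrix.inv_def, Ring.inverse_eq_inv', Matrix.smul_apply, smul_eq_mul]
  simp only [hinv]
  refine ((differentiableOn_matrix_det hA).inv fun z hz => ?_).mul
    (differentiableOn_matrix_adjugate_apply hA i j)
  exact ((isUnit_iff_isUnit_det _).mp (hAs z hz)).ne_zero

end MatrixFunctions

theorem ContinuousOn.matrix_inv {X K ι : Type*} [TopologicalSpace X] [Field K] [TopologicalSpace K]
    [IsTopologicalRing K] [ContinuousInv₀ K] [Fintype ι] [DecidableEq ι]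
    {A : X → Matrix ι ι K} {s : Set X} (hA : ContinuousOn A s) (hAs : ∀ x ∈ s, IsUnit (A x)) :
    ContinuousOn (fun x => (A x)⁻¹) s := fun x hx =>
  (continuousAt_matrix_inv _ (Ring.inverse_eq_inv' (G₀ := K) ▸
    continuousAt_inv₀ ((isUnit_iff_isUnit_det _).mp (hAs x hx)).ne_zero)).comp_continuousWithinAt
    (hA x hx)

namespace LeftCanonicalFactorizationDatum

variable {n : ℕ} {f f' gp gm hp hm : ℂ → Matrix (Fin n) (Fin n) ℂ}

theorem inv_mul_eq_mul_inv_conj (hg : LeftCanonicalFactorizationDatum n f gp gm)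
    (hh : LeftCanonicalFactorizationDatum n f hp hm) {z : ℂ} (hz : ‖z‖ = 1) :
    (gp z)⁻¹ * hp z = gm (conj z) * (hm (conj z))⁻¹ := by
  have hz' : z ∈ closedDisk := hz.le
  have hz_conj : conj z ∈ closedDisk := (RCLike.norm_conj z).trans hz |>.le
  have hp_det := (isUnit_iff_isUnit_det _).mp (hg.unit_p z hz')
  have hm_det := (isUnit_iff_isUnit_det _).mp (hh.unit_m (conj z) hz_conj)
  calc (gp z)⁻¹ * hp z = (gp z)⁻¹ * (hp z * hm (conj z)) * (hm (conj z))⁻¹ := by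
        rw [← Matrix.mul_assoc, mul_nonsing_inv_cancel_right _ _ hm_det]
    _ = gm (conj z) * (hm (conj z))⁻¹ := by
        rw [← hh.factor z hz, hg.factor z hz, nonsing_inv_mul_cancel_left _ _ hp_det]

theorem diffContOnCl_inv_mul_apply (hg : LeftCanonicalFactorizationDatum n f gp gm)
    (hh : LeftCanonicalFactorizationDatum n f' hp hm) (i j : Fin n) :
    DiffContOnCl ℂ (fun z => ((gp z)⁻¹ * hp z) i j) (ball 0 1) := by
  refine .mk_ball ?_ ?_
  · rw [← openDisk_eq_ball]
    refine differentiableOn_matrix_mul_apply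
      (differentiableOn_matrix_inv_apply hg.hol_p fun z hz => ?_) hh.hol_p i j
    exact hg.unit_p z (openDisk_subset_closedDisk hz)
  · rw [← closedDisk_eq_closedBall]
    exact (continuous_id.matrix_elem i j).comp_continuousOn
      ((hg.cont_p.matrix_inv hg.unit_p).mul hh.cont_p)

theorem diffContOnCl_mul_inv_apply (hg : LeftCanonicalFactorizationDatum n f gp gm)
    (hh : LeftCanonicalFactorizationDatum n f' hp hm) (i j : Fin n) :
    DiffContOnCl ℂ (fun z => (gm z * (hm z)⁻¹) i j) (ball 0 1) := by
  refine .mk_ball ?_ ?_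
  · rw [← openDisk_eq_ball]
    refine differentiableOn_matrix_mul_apply hg.hol_m
      (differentiableOn_matrix_inv_apply hh.hol_m fun z hz => ?_) i j
    exact hh.unit_m z (openDisk_subset_closedDisk hz)
  · rw [← closedDisk_eq_closedBall]
    exact (continuous_id.matrix_elem i j).comp_continuousOn
      (hg.cont_m.mul (hh.cont_m.matrix_inv hh.unit_m))

end LeftCanonicalFactorizationDatum

theorem left_canonical_factorization_unique_up_to_constant_general
    {n : ℕ} (f gp gm hp hm : ℂ → Matrix (Fin n) (Fin n) ℂ)
    (hg : LeftCanonicalFactorizationDatum n f gp gm)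
    (hh : LeftCanonicalFactorizationDatum n f hp hm) :
    ∃ C : Matrix (Fin n) (Fin n) ℂ, IsUnit C ∧
      ∀ z ∈ closedDisk, hp z = gp z * C⁻¹ ∧ hm z = C * gm z := by
  have hFG : ∀ z ∈ sphere (0 : ℂ) 1, (gp z)⁻¹ * hp z = gm (conj z) * (hm (conj z))⁻¹ :=
    fun z hz => hg.inv_mul_eq_mul_inv_conj hh (mem_sphere_zero_iff_norm.mp hz)
  have hF := Matrix.eq_const_of_eq_comp_conj (hg.diffContOnCl_inv_mul_apply hh)
    (hg.diffContOnCl_mul_inv_apply hh) hFG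
  have hG := Matrix.eq_const_of_eq_comp_conj (hg.diffContOnCl_mul_inv_apply hh)
    (hg.diffContOnCl_inv_mul_apply hh) fun z hz => by
      rw [hFG (conj z) (by simpa using hz), conj_conj]
  have h0 : (0 : ℂ) ∈ closedDisk := by simp [closedDisk]
  have hD : IsUnit (gm 0 * (hm 0)⁻¹) :=
    (hg.unit_m 0 h0).mul (isUnit_nonsing_inv_iff.mpr (hh.unit_m 0 h0))
  refine ⟨(gm 0 * (hm 0)⁻¹)⁻¹, isUnit_nonsing_inv_iff.mpr hD, fun z hz => ?_⟩
  have hz' : z ∈ closedBall (0 : ℂ) 1 := closedDisk_eq_closedBall ▸ hz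
  have hgm : gm z = gm 0 * (hm 0)⁻¹ * hm z := by
    rw [← hF 0 (mem_closedBall_self zero_le_one), ← hG z hz',
      nonsing_inv_mul_cancel_right _ _ ((isUnit_iff_isUnit_det _).mp (hh.unit_m z hz))]
  constructor
  · rw [nonsing_inv_nonsing_inv _ ((isUnit_iff_isUnit_det _).mp hD), ← hF z hz',
      mul_nonsing_inv_cancel_left _ _ ((isUnit_iff_isUnit_det _).mp (hg.unit_p z hz))]
  · rw [hgm, nonsing_inv_mul_cancel_left _ _ ((isUnit_iff_isUnit_det _).mp hD)]

/-- Two left canonical factorization data of the same symbol differ by a constant invertible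
matrix. -/
theorem left_canonical_factorization_unique_up_to_constant
    {n : ℕ} (hn : 1 ≤ n) (f gp gm hp hm : ℂ → Matrix (Fin n) (Fin n) ℂ)
    (hg : LeftCanonicalFactorizationDatum n f gp gm)
    (hh : LeftCanonicalFactorizationDatum n f hp hm) :
    ∃ C : Matrix (Fin n) (Fin n) ℂ, IsUnit C ∧
      ∀ z ∈ closedDisk, hp z = gp z * C⁻¹ ∧ hm z = C * gm z :=
  left_canonical_factorization_unique_up_to_constant_general f gp gm hp hm hg hh
end

section
/- Define 3×3 complex matrix-valued functions by h(z,w) = [[zw + w, z − 1/2, 0], [z − 1/2, z w⁻¹ + (1/2) w⁻¹, 1], [0, 1, z⁻¹]], h⁻(z,w) = [[1, 0, 0], [(1+2z)/((−1+2z)w), 1, 0], [0, 0, 1]], and h⁺(z,w) = [[(1+z)w, −1/2 + z, 0], [(1+10z)/(2−4z), 0, 1], [0, 1, z⁻¹]]. Then for all z, w ∈ ℂ with z ≠ 0, w ≠ 0 and z ≠ 1/2, one has the matrix identity h(z,w) = h⁻(z,w) · h⁺(z,w). -/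
open Complex Matrix

/-- The off-diagonal block of the two-dimensional model Hamiltonian of Section 5.1. -/
noncomputable def hSymbol (z w : ℂ) : Matrix (Fin 3) (Fin 3) ℂ :=
  !![z * w + w, z - 1/2, 0;
     z - 1/2, z * w⁻¹ + (1/2) * w⁻¹, 1;
     0, 1, z⁻¹]

/-- The left factor `h⁻` of the Wiener–Hopf factorization in the `w`-variable. -/
noncomputable def hWHminus (z w : ℂ) : Matrix (Fin 3) (Fin 3) ℂ :=
  !![1, 0, 0;
     (1 + 2 * z) / ((-1 + 2 * z) * w), 1, 0;
     0, 0, 1]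

/-- The right factor `h⁺` of the Wiener–Hopf factorization in the `w`-variable. -/
noncomputable def hWHplus (z w : ℂ) : Matrix (Fin 3) (Fin 3) ℂ :=
  !![(1 + z) * w, -1/2 + z, 0;
     (1 + 10 * z) / (2 - 4 * z), 0, 1;
     0, 1, z⁻¹]

/-! `h⁻` is an elementary row operation: left multiplication by it adds
`(1 + 2z) / ((2z - 1) w)` times the first row to the second. `h` and `h⁺` already agree in the
first and last rows, and the row operation turns the middle row of `h⁺` into that of `h`. -/

theorem hWHminus_eq_transvection (z w : ℂ) :
    hWHminus z w = transvection 1 0 ((1 + 2 * z) / ((-1 + 2 * z) * w)) := by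
  ext i j
  fin_cases i <;> fin_cases j <;> simp [hWHminus, transvection, one_apply]

/- The first entry amounts to `2 (1 + 2z)(1 + z) - (1 + 10z) = (2z - 1)²`. -/
theorem hWHplus_row_one_add_smul_row_zero {z w : ℂ} (hw : w ≠ 0) (hz : z ≠ 1/2) :
    hWHplus z w 1 + ((1 + 2 * z) / ((-1 + 2 * z) * w)) • hWHplus z w 0 = hSymbol z w 1 := by
  have h₁ : (-1 : ℂ) + 2 * z ≠ 0 := fun h => hz (by linear_combination h / 2)
  have h₂ : (2 : ℂ) - 4 * z ≠ 0 := fun h => hz (by linear_combination -h / 4)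
  ext j
  fin_cases j <;>
    simp only [hWHplus, hSymbol, Fin.isValue, Fin.zero_eta, Fin.mk_one, Fin.reduceFinMk,
      Pi.add_apply, Pi.smul_apply, smul_eq_mul, of_apply, cons_val', cons_val_zero, cons_val_one,
      cons_val, cons_val_fin_one, mul_zero, add_zero, one_div]
  · rw [div_mul_eq_mul_div, ← mul_assoc, mul_div_mul_right _ _ hw,
      div_add_div _ _ h₂ h₁, div_eq_iff (mul_ne_zero h₂ h₁)]
    ring
  · field_simp
    ring

/-- The explicit Wiener–Hopf factorization `h = h⁻ h⁺` in the `w`-variable. -/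
theorem hSymbol_eq_hWHminus_mul_hWHplus :
    ∀ z w : ℂ, z ≠ 0 → w ≠ 0 → z ≠ 1/2 →
      hSymbol z w = hWHminus z w * hWHplus z w := by
  intro z w _ hw hz
  rw [hWHminus_eq_transvection]
  ext i j
  match i with
  | 0 =>
    rw [transvection_mul_apply_of_ne _ _ _ _ (by decide)]
    fin_cases j <;> simp [hSymbol, hWHplus] <;> ring
  | 1 =>
    rw [transvection_mul_apply_same, ← hWHplus_row_one_add_smul_row_zero hw hz]
    rfl
  | 2 =>
    rw [transvection_mul_apply_of_ne _ _ _ _ (by decide)]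
    fin_cases j <;> simp [hSymbol, hWHplus]
end

section
/- Let h(z,w) = [[zw + w, z − 1/2, 0], [z − 1/2, z w⁻¹ + (1/2) w⁻¹, 1], [0, 1, z⁻¹]], and set H(z,w) = [[0, h(z,w)*], [h(z,w), 0]] ∈ M_6(ℂ) in 3×3 block form (where * denotes conjugate transpose), Π = [[1₃, 0], [0, −1₃]] and I = [[0, 1₃], [1₃, 0]]. Then for all z, w ∈ ℂ with z ≠ 0 and w ≠ 0: (i) h(z,w)* = h(z̄, w̄), where z̄ denotes complex conjugation; (ii) H(z,w) is Hermitian; (iii) Π H(z,w) Π = −H(z,w) (chiral symmetry); and (iv) I H(z,w) I = H(z̄, w̄); in particular, for z, w on the unit circle, I H(z,w) I = H(z⁻¹, w⁻¹) (inversion symmetry). Moreover Π and I are Hermitian unitary and Π I = −I Π. -/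
open Complex Matrix

/-- The two-dimensional model Hamiltonian `H(z,w) = [[0, h*],[h, 0]]`. -/
noncomputable def HSymbol (z w : ℂ) : Matrix (Fin 3 ⊕ Fin 3) (Fin 3 ⊕ Fin 3) ℂ :=
  Matrix.fromBlocks 0 (hSymbol z w)ᴴ (hSymbol z w) 0

/-- The chiral symmetry operator `Π = [[1₃, 0], [0, −1₃]]`. -/
noncomputable def chiralOp : Matrix (Fin 3 ⊕ Fin 3) (Fin 3 ⊕ Fin 3) ℂ :=
  Matrix.fromBlocks 1 0 0 (-1)

/-- The inversion symmetry operator `I = [[0, 1₃], [1₃, 0]]`. -/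
noncomputable def inversionOp : Matrix (Fin 3 ⊕ Fin 3) (Fin 3 ⊕ Fin 3) ℂ :=
  Matrix.fromBlocks 0 1 1 0

/-! Everything is block-matrix arithmetic once one entrywise fact is known: `h(z,w)ᴴ = h(z̄,w̄)`.
Hence `H(z̄,w̄)` is `H(z,w)` with its off-diagonal blocks swapped, which is exactly conjugation
by `I`; on the unit circle `z̄ = z⁻¹`. -/

namespace Matrix

variable {m n α : Type*}

theorem isHermitian_fromBlocks_zero_conjTranspose [AddMonoid α] [StarAddMonoid α]
    (A : Matrix n m α) : (fromBlocks 0 Aᴴ A 0 : Matrix (m ⊕ n) (m ⊕ n) α).IsHermitian :=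
  IsHermitian.fromBlocks isHermitian_zero (conjTranspose_conjTranspose A) isHermitian_zero

section Ring

variable [Fintype m] [Fintype n] [DecidableEq m] [DecidableEq n] [Ring α]

theorem fromBlocks_one_neg_one_mul_self :
    (fromBlocks 1 0 0 (-1) : Matrix (m ⊕ n) (m ⊕ n) α) * fromBlocks 1 0 0 (-1) = 1 := by
  simp [fromBlocks_multiply, ← fromBlocks_one]

theorem fromBlocks_zero_one_one_zero_mul_self :
    (fromBlocks 0 1 1 0 : Matrix (m ⊕ m) (m ⊕ m) α) * fromBlocks 0 1 1 0 = 1 := by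
  simp [fromBlocks_multiply, ← fromBlocks_one]

theorem fromBlocks_one_neg_one_conj_offDiag (B : Matrix m n α) (C : Matrix n m α) :
    fromBlocks 1 0 0 (-1) * fromBlocks 0 B C 0 * fromBlocks 1 0 0 (-1) =
      -fromBlocks 0 B C 0 := by
  simp [fromBlocks_multiply, fromBlocks_neg]

theorem fromBlocks_zero_one_one_zero_conj (A B C D : Matrix m m α) :
    fromBlocks 0 1 1 0 * fromBlocks A B C D * fromBlocks 0 1 1 0 = fromBlocks D C B A := by
  simp [fromBlocks_multiply]

theorem fromBlocks_one_neg_one_mul_fromBlocks_zero_one_one_zero :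
    (fromBlocks 1 0 0 (-1) : Matrix (m ⊕ m) (m ⊕ m) α) * fromBlocks 0 1 1 0 =
      -(fromBlocks 0 1 1 0 * fromBlocks 1 0 0 (-1)) := by
  simp [fromBlocks_multiply, fromBlocks_neg]

end Ring

end Matrix

theorem hSymbol_conjTranspose (z w : ℂ) :
    (hSymbol z w)ᴴ = hSymbol (starRingEnd ℂ z) (starRingEnd ℂ w) := by
  ext i j
  fin_cases i <;> fin_cases j <;> simp [hSymbol]

theorem HSymbol_conj (z w : ℂ) :
    HSymbol (starRingEnd ℂ z) (starRingEnd ℂ w) = fromBlocks 0 (hSymbol z w) (hSymbol z w)ᴴ 0 := by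
  rw [HSymbol, ← hSymbol_conjTranspose, conjTranspose_conjTranspose]

theorem inversionOp_conj_HSymbol (z w : ℂ) :
    inversionOp * HSymbol z w * inversionOp = HSymbol (starRingEnd ℂ z) (starRingEnd ℂ w) := by
  rw [HSymbol_conj, inversionOp, HSymbol, fromBlocks_zero_one_one_zero_conj]

/-- The model Hamiltonian of Section 5.1 is Hermitian and preserves the chiral symmetry `Π`
and the inversion symmetry `I`, with `Π` and `I` Hermitian unitary and anticommuting. -/
theorem HSymbol_symmetries :
    (∀ z w : ℂ, z ≠ 0 → w ≠ 0 →
      (hSymbol z w)ᴴ = hSymbol (starRingEnd ℂ z) (starRingEnd ℂ w)) ∧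
    (∀ z w : ℂ, z ≠ 0 → w ≠ 0 → (HSymbol z w).IsHermitian) ∧
    (∀ z w : ℂ, z ≠ 0 → w ≠ 0 →
      chiralOp * HSymbol z w * chiralOp = -(HSymbol z w)) ∧
    (∀ z w : ℂ, z ≠ 0 → w ≠ 0 →
      inversionOp * HSymbol z w * inversionOp =
        HSymbol (starRingEnd ℂ z) (starRingEnd ℂ w)) ∧
    (∀ z w : ℂ, ‖z‖ = 1 → ‖w‖ = 1 →
      inversionOp * HSymbol z w * inversionOp = HSymbol z⁻¹ w⁻¹) ∧
    chiralOp.IsHermitian ∧ chiralOp * chiralOp = 1 ∧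
    inversionOp.IsHermitian ∧ inversionOp * inversionOp = 1 ∧
    chiralOp * inversionOp = -(inversionOp * chiralOp) := by
  refine ⟨fun z w _ _ => hSymbol_conjTranspose z w,
    fun z w _ _ => isHermitian_fromBlocks_zero_conjTranspose _,
    fun z w _ _ => fromBlocks_one_neg_one_conj_offDiag _ _,
    fun z w _ _ => inversionOp_conj_HSymbol z w, ?_,
    IsHermitian.fromBlocks isHermitian_one (by simp) isHermitian_one.neg,
    fromBlocks_one_neg_one_mul_self,
    IsHermitian.fromBlocks isHermitian_zero (by simp) isHermitian_zero,
    fromBlocks_zero_one_one_zero_mul_self,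
    fromBlocks_one_neg_one_mul_fromBlocks_zero_one_one_zero⟩
  intro z w hz hw
  rw [inversionOp_conj_HSymbol, ← Complex.inv_eq_conj hz, ← Complex.inv_eq_conj hw]
end

section
/- Let N ≥ 1, let H : 𝕋² → M_N(ℂ) be a continuous map, and let Π, I ∈ M_N(ℂ) be Hermitian unitary matrices with Π I = −I Π, such that I H(z,w) I = H(z̄, w̄) and Π H(z,w) Π = −H(z,w) for all (z,w) ∈ 𝕋². Define H' on 𝕋² × ℝ by H'(z,w,θ) = H(z,w) cos θ − Π sin θ when cos θ ≥ 0, and H'(z,w,θ) = I cos θ − Π sin θ when cos θ ≤ 0. Then: (i) H' is well defined (when cos θ = 0 the two formulas both equal −Π sin θ) and is continuous and 2π-periodic in θ; and (ii) H' satisfies the inversion symmetry I H'(z,w,θ) I = H'(z̄, w̄, −θ) for all (z,w) ∈ 𝕋² and all θ ∈ ℝ. -/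
/-!
Since `I` anticommutes with `Π`, conjugation by `I` flips the sign of the `Π sin θ` term, which is
exactly the effect of `θ ↦ −θ` (cos is even, sin odd). On the branch `cos θ ≥ 0` it sends `H(z,w)`
to `H(z̄,w̄)`, and on the other it fixes `I` since `I² = 1`. Continuity in `θ` holds because the
two branches agree on `cos θ = 0`.
-/

open Complex Matrix

/-- The suspended Hamiltonian `H'(z,w,θ)` of the three-dimensional example (Section 5.2):
`H(z,w) cos θ − P sin θ` when `cos θ ≥ 0`, and `I cos θ − P sin θ` when `cos θ ≤ 0`. -/
noncomputable def suspend {N : ℕ} (H : ℂ → ℂ → Matrix (Fin N) (Fin N) ℂ)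
    (P Iop : Matrix (Fin N) (Fin N) ℂ) (z w : ℂ) (θ : ℝ) : Matrix (Fin N) (Fin N) ℂ :=
  if 0 ≤ Real.cos θ then (Real.cos θ : ℂ) • H z w - (Real.sin θ : ℂ) • P
  else (Real.cos θ : ℂ) • Iop - (Real.sin θ : ℂ) • P

section Conjugation

variable {R A : Type*} [CommRing R] [Ring A] [Algebra R A]

theorem mul_mul_eq_neg_of_anticomm {I P : A} (hI2 : I * I = 1) (hPI : P * I = -(I * P)) :
    I * P * I = -P := by
  rw [mul_assoc, hPI, mul_neg, ← mul_assoc, hI2, one_mul]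

theorem conj_smul_sub_smul_of_anticomm {I P : A} (hI2 : I * I = 1) (hPI : P * I = -(I * P))
    (c s : R) (X : A) :
    I * (c • X - s • P) * I = c • (I * X * I) + s • P := by
  rw [mul_sub, sub_mul, mul_smul_comm, mul_smul_comm, smul_mul_assoc, smul_mul_assoc,
    mul_mul_eq_neg_of_anticomm hI2 hPI, smul_neg, sub_neg_eq_add]

end Conjugation

section Suspension

variable {N : ℕ} (H : ℂ → ℂ → Matrix (Fin N) (Fin N) ℂ) (P Iop : Matrix (Fin N) (Fin N) ℂ)
  (z w : ℂ)

theorem suspend_neg (θ : ℝ) :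
    suspend H P Iop z w (-θ) =
      if 0 ≤ Real.cos θ then (Real.cos θ : ℂ) • H z w + (Real.sin θ : ℂ) • P
      else (Real.cos θ : ℂ) • Iop + (Real.sin θ : ℂ) • P := by
  simp only [suspend, Real.cos_neg, Real.sin_neg, ofReal_neg, neg_smul, sub_neg_eq_add]

theorem suspend_add_two_pi (θ : ℝ) :
    suspend H P Iop z w (θ + 2 * Real.pi) = suspend H P Iop z w θ := by
  rw [suspend, suspend, Real.cos_add_two_pi, Real.sin_add_two_pi]

theorem continuous_suspend : Continuous fun θ : ℝ => suspend H P Iop z w θ := by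
  have branch (X : Matrix (Fin N) (Fin N) ℂ) :
      Continuous fun θ : ℝ => (Real.cos θ : ℂ) • X - (Real.sin θ : ℂ) • P := by
    fun_prop
  refine Continuous.if_le (branch _) (branch _) continuous_const Real.continuous_cos ?_
  intro θ hθ
  simp [← hθ]

theorem conj_suspend {Iop : Matrix (Fin N) (Fin N) ℂ} (hI2 : Iop * Iop = 1)
    (hPI : P * Iop = -(Iop * P))
    (hinv : Iop * H z w * Iop = H (starRingEnd ℂ z) (starRingEnd ℂ w)) (θ : ℝ) :
    Iop * suspend H P Iop z w θ * Iop =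
      suspend H P Iop (starRingEnd ℂ z) (starRingEnd ℂ w) (-θ) := by
  rw [suspend_neg, suspend]
  split_ifs
  · rw [conj_smul_sub_smul_of_anticomm hI2 hPI, hinv]
  · rw [conj_smul_sub_smul_of_anticomm hI2 hPI, mul_assoc, hI2, mul_one]

end Suspension

theorem suspend_welldefined_continuous_periodic_inversion_general
    {N : ℕ} (H : ℂ → ℂ → Matrix (Fin N) (Fin N) ℂ)
    (P Iop : Matrix (Fin N) (Fin N) ℂ)
    (hI2 : Iop * Iop = 1)
    (hPI : P * Iop = -(Iop * P))
    (hinv : ∀ z w : ℂ, ‖z‖ = 1 → ‖w‖ = 1 →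
      Iop * H z w * Iop = H (starRingEnd ℂ z) (starRingEnd ℂ w)) :
    (∀ z w : ℂ, ∀ θ : ℝ, Real.cos θ = 0 →
      (Real.cos θ : ℂ) • H z w - (Real.sin θ : ℂ) • P =
        (Real.cos θ : ℂ) • Iop - (Real.sin θ : ℂ) • P) ∧
    (∀ z w : ℂ, Continuous fun θ : ℝ => suspend H P Iop z w θ) ∧
    (∀ z w : ℂ, ∀ θ : ℝ,
      suspend H P Iop z w (θ + 2 * Real.pi) = suspend H P Iop z w θ) ∧
    (∀ z w : ℂ, ∀ θ : ℝ, ‖z‖ = 1 → ‖w‖ = 1 →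
      Iop * suspend H P Iop z w θ * Iop =
        suspend H P Iop (starRingEnd ℂ z) (starRingEnd ℂ w) (-θ)) :=
  ⟨fun z w θ hθ => by simp [hθ],
    continuous_suspend H P Iop,
    suspend_add_two_pi H P Iop,
    fun z w θ hz hw => conj_suspend H P z w hI2 hPI (hinv z w hz hw) θ⟩

/-- The suspension `H'` of a two-dimensional inversion- and chiral-symmetric Hamiltonian is
well defined (the two branches agree when `cos θ = 0`), continuous and `2π`-periodic in `θ`,
and satisfies the inversion symmetry `I H'(z,w,θ) I = H'(z̄,w̄,−θ)`. -/
theorem suspend_welldefined_continuous_periodic_inversion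
    {N : ℕ} (hN : 1 ≤ N) (H : ℂ → ℂ → Matrix (Fin N) (Fin N) ℂ)
    (hHcont : ContinuousOn (fun p : ℂ × ℂ => H p.1 p.2)
      {p : ℂ × ℂ | ‖p.1‖ = 1 ∧ ‖p.2‖ = 1})
    (P Iop : Matrix (Fin N) (Fin N) ℂ)
    (hP : P.IsHermitian) (hP2 : P * P = 1)
    (hI : Iop.IsHermitian) (hI2 : Iop * Iop = 1)
    (hPI : P * Iop = -(Iop * P))
    (hinv : ∀ z w : ℂ, ‖z‖ = 1 → ‖w‖ = 1 →
      Iop * H z w * Iop = H (starRingEnd ℂ z) (starRingEnd ℂ w))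
    (hchiral : ∀ z w : ℂ, ‖z‖ = 1 → ‖w‖ = 1 → P * H z w * P = -(H z w)) :
    (∀ z w : ℂ, ∀ θ : ℝ, Real.cos θ = 0 →
      (Real.cos θ : ℂ) • H z w - (Real.sin θ : ℂ) • P =
        (Real.cos θ : ℂ) • Iop - (Real.sin θ : ℂ) • P) ∧
    (∀ z w : ℂ, Continuous fun θ : ℝ => suspend H P Iop z w θ) ∧
    (∀ z w : ℂ, ∀ θ : ℝ,
      suspend H P Iop z w (θ + 2 * Real.pi) = suspend H P Iop z w θ) ∧
    (∀ z w : ℂ, ∀ θ : ℝ, ‖z‖ = 1 → ‖w‖ = 1 →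
      Iop * suspend H P Iop z w θ * Iop =
        suspend H P Iop (starRingEnd ℂ z) (starRingEnd ℂ w) (-θ)) :=
  suspend_welldefined_continuous_periodic_inversion_general H P Iop hI2 hPI hinv
end
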